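/- The extended shuffle product ⧢ on ℋ_ℤ is associative: (a ⧢ b) ⧢ c = a ⧢ (b ⧢ c) for all a, b, c ∈ ℋ_ℤ. -/

import Mathlib

noncomputable section

/-- The vector space ℋ_ℤ with basis the symbols `[s₁,…,s_k]` (lists of integers),
the empty list being the unit `1`. -/
abbrev HZ : Type := List ℤ →₀ ℚ

/-- The basis symbol `[s₁,…,s_k]`. -/
def bs (l : List ℤ) : HZ := Finsupp.single l 1

/-- Linear extension of a map defined on basis symbols. -/
def hlift (f : List ℤ → HZ) : HZ →ₗ[ℚ] HZ := Finsupp.lift HZ ℚ (List ℤ) f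

/-- Prepending a `0` entry to every basis symbol. -/
def preZ : HZ →ₗ[ℚ] HZ := hlift fun l => bs (0 :: l)

/-- The operator `I` adding 1 to the first entry. -/
def Imap : HZ →ₗ[ℚ] HZ := hlift fun l =>
  match l with
  | [] => 0
  | s :: r => bs ((s + 1) :: r)

/-- The operator `J` subtracting 1 from the first entry, with `J(1) = 0`. -/
def Jmap : HZ →ₗ[ℚ] HZ := hlift fun l =>
  match l with
  | [] => 0
  | s :: r => bs ((s - 1) :: r)

/-- The five-case recursion defining the extended shuffle product on ℋ_ℤ. -/
def IsExtShuffle (m : HZ →ₗ[ℚ] HZ →ₗ[ℚ] HZ) : Prop :=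
  (∀ x, m (bs []) x = x) ∧
  (∀ x, m x (bs []) = x) ∧
  (∀ (s' : List ℤ) (t₁ : ℤ) (t' : List ℤ),
    m (bs (0 :: s')) (bs (t₁ :: t')) = preZ (m (bs s') (bs (t₁ :: t')))) ∧
  (∀ (s₁ : ℤ), 0 < s₁ → ∀ (s' t' : List ℤ),
    m (bs (s₁ :: s')) (bs (0 :: t')) = preZ (m (bs (s₁ :: s')) (bs t'))) ∧
  (∀ (s₁ t₁ : ℤ), 0 < s₁ → 0 < t₁ → ∀ (s' t' : List ℤ),
    m (bs (s₁ :: s')) (bs (t₁ :: t')) =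
      Imap (m (bs (s₁ :: s')) (bs ((t₁ - 1) :: t'))) +
      Imap (m (bs ((s₁ - 1) :: s')) (bs (t₁ :: t')))) ∧
  (∀ (s₁ t₁ : ℤ), 0 < s₁ → t₁ < 0 → ∀ (s' t' : List ℤ),
    m (bs (s₁ :: s')) (bs (t₁ :: t')) =
      Jmap (m (bs (s₁ :: s')) (bs ((t₁ + 1) :: t'))) -
      m (bs ((s₁ - 1) :: s')) (bs ((t₁ + 1) :: t'))) ∧
  (∀ (s₁ : ℤ), s₁ < 0 → ∀ (t₁ : ℤ) (s' t' : List ℤ),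
    m (bs (s₁ :: s')) (bs (t₁ :: t')) =
      Jmap (m (bs ((s₁ + 1) :: s')) (bs (t₁ :: t'))) -
      m (bs ((s₁ + 1) :: s')) (bs ((t₁ - 1) :: t')))

/-!
Write `J` for `Jmap` and `A(a, b, c)` for the associator. Away from the unit, `I` and `J` are
inverse, and read through `J = I⁻¹` the three rules for nonzero heads all say the same thing:
`J` is a derivation of `⧢`. This needs `I` to be inverted on products of symbols with
nonnegative heads, which are again spanned by such symbols. Consequently `J` is also a
derivation for `A` in each argument. Prepending `0` commutes with `⧢` from the left, and from
the right whenever the other factor has positive heads.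

On basis symbols `A = 0` follows by well-founded induction, looking at the first head that is
not positive. If it is zero, the `0`-rules strip it off, leaving shorter symbols. If it is
negative, that symbol is `J` of the one with head one larger, and the derivation identity
expresses `A` through three associators of smaller weight. If all heads are positive,
`A = I (J A)` and `J A` is again a sum of three smaller associators.
-/

theorem hlift_bs (f : List ℤ → HZ) (l : List ℤ) : hlift f (bs l) = f l := by
  simp [hlift, bs, Finsupp.lift_apply, Finsupp.sum_single_index]

theorem hlift_mem {f : List ℤ → HZ} {p : Submodule ℚ HZ} (h : ∀ l, f l ∈ p) (x : HZ) :
    hlift f x ∈ p := by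
  rw [hlift, Finsupp.lift_apply]
  exact Submodule.finsuppSum_mem _ _ _ _ fun l _ => p.smul_mem _ (h l)

theorem preZ_bs (l : List ℤ) : preZ (bs l) = bs (0 :: l) := hlift_bs _ _

theorem Imap_bs_cons (s : ℤ) (l : List ℤ) : Imap (bs (s :: l)) = bs ((s + 1) :: l) :=
  hlift_bs _ _

theorem Jmap_bs_nil : Jmap (bs []) = 0 := hlift_bs _ _

theorem Jmap_bs_cons (s : ℤ) (l : List ℤ) : Jmap (bs (s :: l)) = bs ((s - 1) :: l) :=
  hlift_bs _ _

namespace HZ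

theorem lhom_ext {M : Type*} [AddCommMonoid M] [Module ℚ M] {f g : HZ →ₗ[ℚ] M}
    (h : ∀ l, f (bs l) = g (bs l)) : f = g :=
  Finsupp.lhom_ext' fun l => LinearMap.ext_ring (h l)

theorem lhom_ext₂ {M : Type*} [AddCommMonoid M] [Module ℚ M] {f g : HZ →ₗ[ℚ] HZ →ₗ[ℚ] M}
    (h : ∀ l₁ l₂, f (bs l₁) (bs l₂) = g (bs l₁) (bs l₂)) : f = g :=
  lhom_ext fun l₁ => lhom_ext (h l₁)

end HZ

def headGE (k : ℤ) : Submodule ℚ HZ :=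
  Submodule.span ℚ {bs (s :: l) | (s : ℤ) (l : List ℤ) (_ : k ≤ s)}

theorem bs_mem_headGE {k s : ℤ} (l : List ℤ) (h : k ≤ s) : bs (s :: l) ∈ headGE k :=
  Submodule.subset_span ⟨s, l, h, rfl⟩

theorem headGE_mono {k k' : ℤ} (h : k ≤ k') : headGE k' ≤ headGE k := by
  refine Submodule.span_mono ?_
  rintro _ ⟨s, l, hs, rfl⟩
  exact ⟨s, l, h.trans hs, rfl⟩

theorem preZ_mem_headGE_zero (x : HZ) : preZ x ∈ headGE 0 :=
  hlift_mem (fun l => bs_mem_headGE l le_rfl) x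

theorem Imap_mem_headGE {k : ℤ} {x : HZ} (hx : x ∈ headGE k) : Imap x ∈ headGE (k + 1) := by
  refine (Submodule.map_span_le Imap _ _).mpr ?_ (Submodule.mem_map_of_mem hx)
  rintro _ ⟨s, l, hs, rfl⟩
  rw [Imap_bs_cons]
  exact bs_mem_headGE l (by omega)

theorem Jmap_Imap_of_mem_headGE {k : ℤ} {x : HZ} (hx : x ∈ headGE k) : Jmap (Imap x) = x := by
  refine LinearMap.eqOn_span' (f := Jmap ∘ₗ Imap) (g := LinearMap.id) ?_ hx
  rintro _ ⟨s, l, -, rfl⟩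
  simp [Imap_bs_cons, Jmap_bs_cons]

theorem Imap_Jmap_of_mem_headGE {k : ℤ} {x : HZ} (hx : x ∈ headGE k) : Imap (Jmap x) = x := by
  refine LinearMap.eqOn_span' (f := Imap ∘ₗ Jmap) (g := LinearMap.id) ?_ hx
  rintro _ ⟨s, l, -, rfl⟩
  simp [Imap_bs_cons, Jmap_bs_cons]

theorem apply_mem_of_mem_headGE {f : HZ →ₗ[ℚ] HZ →ₗ[ℚ] HZ} {k : ℤ} {p : Submodule ℚ HZ}
    (h : ∀ s t a b, k ≤ s → k ≤ t → f (bs (s :: a)) (bs (t :: b)) ∈ p) {x y : HZ}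
    (hx : x ∈ headGE k) (hy : y ∈ headGE k) : f x y ∈ p := by
  have hspan : Submodule.map₂ f (headGE k) (headGE k) ≤ p := by
    rw [headGE, Submodule.map₂_span_span, Submodule.span_le]
    rintro _ ⟨_, ⟨s, a, hs, rfl⟩, _, ⟨t, b, ht, rfl⟩, rfl⟩
    exact h s t a b hs ht
  exact hspan (Submodule.apply_mem_map₂ f hx hy)

def HZ.associator (m : HZ →ₗ[ℚ] HZ →ₗ[ℚ] HZ) (a b c : HZ) : HZ := m (m a b) c - m a (m b c)

namespace IsExtShuffle

variable {m : HZ →ₗ[ℚ] HZ →ₗ[ℚ] HZ} (hm : IsExtShuffle m)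
include hm

theorem one_mul (x : HZ) : m (bs []) x = x := hm.1 x

theorem mul_one (x : HZ) : m x (bs []) = x := hm.2.1 x

theorem preZ_mul (x y : HZ) : m (preZ x) y = preZ (m x y) := by
  have ⟨_, _, hzero, _⟩ := hm
  refine LinearMap.congr_fun₂ (f := m ∘ₗ preZ) (g := m.compr₂ preZ) (HZ.lhom_ext₂ ?_) x y
  rintro l (_ | ⟨t, l'⟩)
  · simp [preZ_bs, hm.mul_one]
  · simp [preZ_bs, hzero]

theorem mul_preZ_of_mem_headGE_one {a : HZ} (ha : a ∈ headGE 1) (y : HZ) :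
    m a (preZ y) = preZ (m a y) := by
  have ⟨_, _, _, hposzero, _⟩ := hm
  refine LinearMap.eqOn_span' (f := m.flip (preZ y)) (g := preZ ∘ₗ m.flip y) ?_ ha
  rintro _ ⟨s, l, hs, rfl⟩
  refine LinearMap.congr_fun (f := m (bs (s :: l)) ∘ₗ preZ) (g := preZ ∘ₗ m (bs (s :: l)))
    (HZ.lhom_ext fun t => ?_) y
  simp [preZ_bs, hposzero s (by omega)]

theorem mul_bs_cons_mem_headGE_zero {s t : ℤ} (hs : 0 ≤ s) (ht : 0 ≤ t) (a b : List ℤ) :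
    m (bs (s :: a)) (bs (t :: b)) ∈ headGE 0 := by
  have ⟨_, _, hzero, hposzero, hpos, _⟩ := hm
  rcases hs.eq_or_lt with rfl | hs
  · rw [hzero]; exact preZ_mem_headGE_zero _
  rcases ht.eq_or_lt with rfl | ht
  · rw [hposzero s hs]; exact preZ_mem_headGE_zero _
  rw [hpos s t hs ht]
  exact headGE_mono (by norm_num)
    (add_mem (Imap_mem_headGE (mul_bs_cons_mem_headGE_zero hs.le (by omega) a b))
      (Imap_mem_headGE (mul_bs_cons_mem_headGE_zero (by omega) ht.le a b)))
termination_by s.toNat + t.toNat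
decreasing_by all_goals omega

theorem mul_mem_headGE_zero {a b : HZ} (ha : a ∈ headGE 0) (hb : b ∈ headGE 0) :
    m a b ∈ headGE 0 :=
  apply_mem_of_mem_headGE (fun _ _ a b hs ht => hm.mul_bs_cons_mem_headGE_zero hs ht a b) ha hb

theorem mul_bs_cons_mem_headGE_one {s t : ℤ} (hs : 0 < s) (ht : 0 < t) (a b : List ℤ) :
    m (bs (s :: a)) (bs (t :: b)) ∈ headGE 1 := by
  have ⟨_, _, _, _, hpos, _⟩ := hm
  rw [hpos s t hs ht]
  simpa only [zero_add] using
    add_mem (Imap_mem_headGE (hm.mul_bs_cons_mem_headGE_zero hs.le (by omega) a b))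
      (Imap_mem_headGE (hm.mul_bs_cons_mem_headGE_zero (by omega) ht.le a b))

theorem mul_mem_headGE_one {a b : HZ} (ha : a ∈ headGE 1) (hb : b ∈ headGE 1) :
    m a b ∈ headGE 1 :=
  apply_mem_of_mem_headGE (fun _ _ a b hs ht => hm.mul_bs_cons_mem_headGE_one hs ht a b) ha hb

theorem Jmap_mul_bs_cons (s t : ℤ) (a b : List ℤ) :
    Jmap (m (bs (s :: a)) (bs (t :: b))) =
      m (bs ((s - 1) :: a)) (bs (t :: b)) + m (bs (s :: a)) (bs ((t - 1) :: b)) := by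
  have ⟨_, _, _, _, hpos, hposneg, hneg⟩ := hm
  rcases le_or_gt s 0 with hs | hs
  · have h := hneg (s - 1) (by omega) t a b
    rw [sub_add_cancel] at h
    rw [h]; abel
  rcases le_or_gt t 0 with ht | ht
  · have h := hposneg s (t - 1) hs (by omega) a b
    rw [sub_add_cancel] at h
    rw [h]; abel
  rw [hpos s t hs ht, map_add,
    Jmap_Imap_of_mem_headGE (hm.mul_bs_cons_mem_headGE_zero hs.le (by omega) a b),
    Jmap_Imap_of_mem_headGE (hm.mul_bs_cons_mem_headGE_zero (by omega) ht.le a b), add_comm]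

theorem Jmap_mul (x y : HZ) : Jmap (m x y) = m (Jmap x) y + m x (Jmap y) := by
  refine LinearMap.congr_fun₂ (f := m.compr₂ Jmap) (g := m ∘ₗ Jmap + m.compl₂ Jmap)
    (HZ.lhom_ext₂ ?_) x y
  rintro (_ | ⟨s, a⟩) (_ | ⟨t, b⟩) <;>
    simp [Jmap_bs_nil, Jmap_bs_cons, hm.one_mul, hm.mul_one, hm.Jmap_mul_bs_cons]

theorem Jmap_associator (a b c : HZ) :
    Jmap (HZ.associator m a b c) = HZ.associator m (Jmap a) b c +
      HZ.associator m a (Jmap b) c + HZ.associator m a b (Jmap c) := by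
  simp only [HZ.associator, map_sub, hm.Jmap_mul, map_add, LinearMap.add_apply]
  abel

theorem associator_mem_headGE_zero {a b c : HZ} (ha : a ∈ headGE 0) (hb : b ∈ headGE 0)
    (hc : c ∈ headGE 0) : HZ.associator m a b c ∈ headGE 0 :=
  sub_mem (hm.mul_mem_headGE_zero (hm.mul_mem_headGE_zero ha hb) hc)
    (hm.mul_mem_headGE_zero ha (hm.mul_mem_headGE_zero hb hc))

theorem associator_preZ_left (a b c : HZ) :
    HZ.associator m (preZ a) b c = preZ (HZ.associator m a b c) := by
  simp only [HZ.associator, hm.preZ_mul, map_sub]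

theorem associator_preZ_middle {a : HZ} (ha : a ∈ headGE 1) (b c : HZ) :
    HZ.associator m a (preZ b) c = preZ (HZ.associator m a b c) := by
  simp only [HZ.associator, hm.preZ_mul, hm.mul_preZ_of_mem_headGE_one ha, map_sub]

theorem associator_preZ_right {a b : HZ} (ha : a ∈ headGE 1) (hb : b ∈ headGE 1) (c : HZ) :
    HZ.associator m a b (preZ c) = preZ (HZ.associator m a b c) := by
  simp only [HZ.associator, hm.mul_preZ_of_mem_headGE_one (hm.mul_mem_headGE_one ha hb),
    hm.mul_preZ_of_mem_headGE_one hb, hm.mul_preZ_of_mem_headGE_one ha, map_sub]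

theorem associator_bs : ∀ a b c : List ℤ, HZ.associator m (bs a) (bs b) (bs c) = 0
  | [], b, c => by simp only [HZ.associator, hm.one_mul, sub_self]
  | a, [], c => by simp only [HZ.associator, hm.one_mul, hm.mul_one, sub_self]
  | a, b, [] => by simp only [HZ.associator, hm.mul_one, sub_self]
  | x :: a, y :: b, z :: c => by
    rcases lt_trichotomy x 0 with hx | rfl | hx
    · have h := hm.Jmap_associator (bs ((x + 1) :: a)) (bs (y :: b)) (bs (z :: c))
      simp only [Jmap_bs_cons, add_sub_cancel_right] at h
      rw [associator_bs ((x + 1) :: a) (y :: b) (z :: c),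
        associator_bs ((x + 1) :: a) ((y - 1) :: b) (z :: c),
        associator_bs ((x + 1) :: a) (y :: b) ((z - 1) :: c)] at h
      simpa using h.symm
    · rw [← preZ_bs, hm.associator_preZ_left, associator_bs a (y :: b) (z :: c), map_zero]
    rcases lt_trichotomy y 0 with hy | rfl | hy
    · have h := hm.Jmap_associator (bs (x :: a)) (bs ((y + 1) :: b)) (bs (z :: c))
      simp only [Jmap_bs_cons, add_sub_cancel_right] at h
      rw [associator_bs (x :: a) ((y + 1) :: b) (z :: c),
        associator_bs ((x - 1) :: a) ((y + 1) :: b) (z :: c),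
        associator_bs (x :: a) ((y + 1) :: b) ((z - 1) :: c)] at h
      simpa using h.symm
    · rw [← preZ_bs, hm.associator_preZ_middle (bs_mem_headGE a hx),
        associator_bs (x :: a) b (z :: c), map_zero]
    rcases lt_trichotomy z 0 with hz | rfl | hz
    · have h := hm.Jmap_associator (bs (x :: a)) (bs (y :: b)) (bs ((z + 1) :: c))
      simp only [Jmap_bs_cons, add_sub_cancel_right] at h
      rw [associator_bs (x :: a) (y :: b) ((z + 1) :: c),
        associator_bs ((x - 1) :: a) (y :: b) ((z + 1) :: c),
        associator_bs (x :: a) ((y - 1) :: b) ((z + 1) :: c)] at h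
      simpa using h.symm
    · rw [← preZ_bs, hm.associator_preZ_right (bs_mem_headGE a hx) (bs_mem_headGE b hy),
        associator_bs (x :: a) (y :: b) c, map_zero]
    · rw [← Imap_Jmap_of_mem_headGE (hm.associator_mem_headGE_zero (bs_mem_headGE a hx.le)
        (bs_mem_headGE b hy.le) (bs_mem_headGE c hz.le)), hm.Jmap_associator]
      simp only [Jmap_bs_cons]
      rw [associator_bs ((x - 1) :: a) (y :: b) (z :: c),
        associator_bs (x :: a) ((y - 1) :: b) (z :: c),
        associator_bs (x :: a) (y :: b) ((z - 1) :: c), add_zero, add_zero, map_zero]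
-- Raising a negative head lowers the weight by 4, 3 or 2 according to its position, while
-- lowering a head raises it by at most 3 in the second and 2 in the third position.
termination_by a b c => (a.length + b.length + c.length,
  4 * (-a.headI).toNat + a.headI.toNat + 3 * (-b.headI).toNat + b.headI.toNat +
    2 * (-c.headI).toNat + c.headI.toNat)
decreasing_by all_goals (simp only [Prod.lex_def, List.length_cons, List.headI, true_and]; omega)

end IsExtShuffle

/-- The extended shuffle product is associative. -/
theorem extended_shuffle_assoc (m : HZ →ₗ[ℚ] HZ →ₗ[ℚ] HZ) (hm : IsExtShuffle m) :
    ∀ a b c : HZ, m (m a b) c = m a (m b c) := by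
  have h : m.compr₂ m = (LinearMap.llcomp ℚ HZ HZ HZ).compl₁₂ m m :=
    HZ.lhom_ext₂ fun a b => HZ.lhom_ext fun c => sub_eq_zero.mp (hm.associator_bs a b c)
  intro a b c
  exact LinearMap.congr_fun (LinearMap.congr_fun₂ h a b) c
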